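/- arXiv:2011.02339 — 3 statements merged into one kernel-verified Lean document; each statement's English description precedes it below -/
import Mathlib

section
/- Let μ = a·δ_{-p} + b·δ_r + c·δ_q with a, b, c > 0, p > 0, q > 0, and -p < r < q. If the signed measure μ * (t·μ) (multiplicative convolution of μ with the measure having density t with respect to μ) is nonnegative and supported in [0, ∞), then r = 0 and p = q. -/
/-!
If the product `x y` of two atoms of `μ`, with weights `u` and `v`, differs from every other
pairwise product of atoms, then `μ * (t·μ)` has weight `u v (x + y)` at `x y`, which must vanish
when `x y < 0`. The atom at `-p q` gives `p = q`; then `r > 0` would force `r = p` through the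
atom at `-p r`, and `r < 0` would force `r = -q` through the atom at `r q`.
-/

namespace MonoidAlgebra

variable {R M : Type*} [Semiring R] [CommMonoid M]

noncomputable def atoms3 (x y z : M) (a b c : R) : MonoidAlgebra R M :=
  single x a + single y b + single z c

theorem atoms3_rotate (x y z : M) (a b c : R) : atoms3 x y z a b c = atoms3 y z x b c a := by
  unfold atoms3; abel

theorem atoms3_swap (x y z : M) (a b c : R) : atoms3 x y z a b c = atoms3 x z y a c b := by
  unfold atoms3; abel

theorem coeff_atoms3_mul_atoms3_of_isolated {x y z : M} (a b c a' b' c' : R)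
    (hxx : x * x ≠ x * y) (hyy : y * y ≠ x * y) (hzz : z * z ≠ x * y)
    (hxz : x * z ≠ x * y) (hyz : y * z ≠ x * y) :
    (atoms3 x y z a b c * atoms3 x y z a' b' c').coeff (x * y) = a * b' + b * a' := by
  have hzx : z * x ≠ x * y := mul_comm x z ▸ hxz
  have hzy : z * y ≠ x * y := mul_comm y z ▸ hyz
  simp only [atoms3, mul_add, add_mul, single_mul_single, coeff_add, coeff_single,
    Finsupp.add_apply, mul_comm y x, Finsupp.single_eq_same, Finsupp.single_eq_of_ne' hxx,
    Finsupp.single_eq_of_ne' hyy, Finsupp.single_eq_of_ne' hzz, Finsupp.single_eq_of_ne' hxz,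
    Finsupp.single_eq_of_ne' hyz, Finsupp.single_eq_of_ne' hzx, Finsupp.single_eq_of_ne' hzy]
  abel

end MonoidAlgebra

open MonoidAlgebra

theorem stmt_2_general (a b c p r q : ℝ) (ha : 0 < a) (hb : 0 < b) (hc : 0 < c)
    (hp : 0 < p) (hq : 0 < q) (hpr : -p < r) (hrq : r < q)
    (hsupp : ∀ x : ℝ, x < 0 →
      ((MonoidAlgebra.single (-p) a + MonoidAlgebra.single r b + MonoidAlgebra.single q c :
          MonoidAlgebra ℝ ℝ) *
        (MonoidAlgebra.single (-p) (-p * a) + MonoidAlgebra.single r (r * b) +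
          MonoidAlgebra.single q (q * c))).coeff x = 0) :
    r = 0 ∧ p = q := by
  change ∀ x : ℝ, x < 0 →
    (atoms3 (-p) r q a b c * atoms3 (-p) r q (-p * a) (r * b) (q * c)).coeff x = 0 at hsupp
  have hpq : p = q := by
    have h := hsupp (-p * q) (by nlinarith)
    rw [atoms3_swap (-p) r q a, atoms3_swap (-p) r q (-p * a),
      coeff_atoms3_mul_atoms3_of_isolated] at h
    · have h' : a * c * (q - p) = 0 := by linear_combination h
      linarith [(mul_eq_zero.1 h').resolve_left (mul_pos ha hc).ne']
    all_goals intro h; nlinarith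
  refine ⟨?_, hpq⟩
  subst hpq
  rcases lt_trichotomy r 0 with hr | hr | hr
  · have h := hsupp (r * p) (by nlinarith)
    rw [atoms3_rotate (-p) r p a, atoms3_rotate (-p) r p (-p * a),
      coeff_atoms3_mul_atoms3_of_isolated] at h
    · have h' : b * c * (r + p) = 0 := by linear_combination h
      linarith [(mul_eq_zero.1 h').resolve_left (mul_pos hb hc).ne']
    all_goals intro h; nlinarith
  · exact hr
  · have h := hsupp (-p * r) (by nlinarith)
    rw [coeff_atoms3_mul_atoms3_of_isolated] at h
    · have h' : a * b * (r - p) = 0 := by linear_combination h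
      linarith [(mul_eq_zero.1 h').resolve_left (mul_pos ha hb).ne']
    all_goals intro h; nlinarith

/-- Let `μ = a·δ_{-p} + b·δ_r + c·δ_q` (a finitely atomic measure, modeled in
`MonoidAlgebra ℝ ℝ`, whose multiplication is multiplicative convolution of atomic measures)
with `a, b, c > 0`, `p > 0`, `q > 0`, `-p < r < q`.  If the signed measure `μ * (t·μ)`
(with `t·μ = -pa·δ_{-p} + rb·δ_r + qc·δ_q` the measure with density `t` w.r.t. `μ`) is
nonnegative (every atom has nonnegative coefficient) and supported in `[0, ∞)`, then
`r = 0` and `p = q`. -/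
theorem stmt_2 (a b c p r q : ℝ) (ha : 0 < a) (hb : 0 < b) (hc : 0 < c)
    (hp : 0 < p) (hq : 0 < q) (hpr : -p < r) (hrq : r < q)
    (hpos : ∀ x : ℝ,
      0 ≤ ((MonoidAlgebra.single (-p) a + MonoidAlgebra.single r b + MonoidAlgebra.single q c :
          MonoidAlgebra ℝ ℝ) *
        (MonoidAlgebra.single (-p) (-p * a) + MonoidAlgebra.single r (r * b) +
          MonoidAlgebra.single q (q * c))).coeff x)
    (hsupp : ∀ x : ℝ, x < 0 →
      ((MonoidAlgebra.single (-p) a + MonoidAlgebra.single r b + MonoidAlgebra.single q c :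
          MonoidAlgebra ℝ ℝ) *
        (MonoidAlgebra.single (-p) (-p * a) + MonoidAlgebra.single r (r * b) +
          MonoidAlgebra.single q (q * c))).coeff x = 0) :
    r = 0 ∧ p = q :=
  stmt_2_general a b c p r q ha hb hc hp hq hpr hrq hsupp
end

section
/- Let γ = (γ_n)_{n∈ℤ₊} be a real sequence satisfying γ_{n+1} = Σ_{j=0}^{r-1} a_j γ_{n-j} for all n ≥ r-1, with a_{r-1} ≠ 0. For n, k ∈ ℤ₊ let M_n(k) denote the (n+1)×(n+1) Hankel matrix with entries (M_n(k))_{ij} = γ_{k+i+j}. If M_{r-1}(2n_0) is positive semidefinite for some integer n_0 ≥ 1, then M_r(2n_0 − 2) is positive semidefinite. -/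
/-!
Let `L` be the Riesz functional `X ^ n ↦ γ n` on `ℝ[X]`, so that
`x ⬝ᵥ M_n(e) x = L (X ^ e * p ^ 2)` with `p = ∑ xᵢ Xⁱ`. The recurrence says that `L` vanishes
on the ideal generated by its characteristic polynomial `q`, and `a_{r-1} ≠ 0` says
`q(0) ≠ 0`, i.e. `X` is invertible modulo `q`. If `ρ` is the remainder of `p X⁻¹` modulo `q`,
then `X ^ 2 * ρ ^ 2 ≡ p ^ 2`, hence `L (X ^ (2n₀-2) p ^ 2) = L (X ^ (2n₀) ρ ^ 2) ≥ 0`, and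
`deg ρ < r` puts the right-hand side in the range of the quadratic form of `M_{r-1}(2n₀)`.
-/

open Polynomial
open scoped Matrix

namespace LinearRecurrence

variable {R : Type*} [CommRing R]

theorem charPoly_coeff_zero (E : LinearRecurrence R) (h : 0 < E.order) :
    E.charPoly.coeff 0 = -E.coeffs ⟨0, h⟩ := by
  have hi : ∀ i : Fin E.order, (i : ℕ) = 0 ↔ i = ⟨0, h⟩ := fun _ =>
    (Fin.ext_iff (b := ⟨0, h⟩)).symm
  simp [charPoly, coeff_monomial, finsetSum_coeff, h.ne', hi]

/-- Mathlib writes recurrences as `u (n + r) = ∑ i, coeffs i * u (n + i)`, so the coefficients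
`a j` of `u (n + 1) = ∑ j, a j * u (n - j)` appear in reverse order. -/
theorem isSolution_rev_of_succ_eq {r : ℕ} (hr : 0 < r) (a : Fin r → R) (u : ℕ → R)
    (h : ∀ n, r - 1 ≤ n → u (n + 1) = ∑ j : Fin r, a j * u (n - j)) :
    (⟨r, fun i => a i.rev⟩ : LinearRecurrence R).IsSolution u := by
  intro n
  dsimp only
  rw [show n + r = n + r - 1 + 1 by omega, h _ (by omega), ← Equiv.sum_comp Fin.revPerm]
  refine Finset.sum_congr rfl fun i _ => ?_
  rw [Fin.revPerm_apply, Fin.val_rev]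
  congr 2
  omega

end LinearRecurrence

section MomentFunctional

variable {R : Type*} [CommRing R]

noncomputable def momentFunctional (u : ℕ → R) : R[X] →ₗ[R] R :=
  lsum fun n => LinearMap.id.smulRight (u n)

theorem momentFunctional_monomial (u : ℕ → R) (n : ℕ) (c : R) :
    momentFunctional u (monomial n c) = c * u n := by
  simp [momentFunctional]

theorem momentFunctional_C_mul_X_pow (u : ℕ → R) (n : ℕ) (c : R) :
    momentFunctional u (C c * X ^ n) = c * u n := by
  rw [C_mul_X_pow_eq_monomial, momentFunctional_monomial]

theorem LinearRecurrence.IsSolution.momentFunctional_charPoly_mul {E : LinearRecurrence R}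
    {u : ℕ → R} (hu : E.IsSolution u) (g : R[X]) :
    momentFunctional u (E.charPoly * g) = 0 := by
  induction g using Polynomial.induction_on' with
  | add f g hf hg => rw [mul_add, map_add, hf, hg, add_zero]
  | monomial n c =>
    simp only [LinearRecurrence.charPoly, sub_mul, Finset.sum_mul, monomial_mul_monomial,
      map_sub, map_sum, momentFunctional_monomial, one_mul]
    rw [add_comm, hu n, Finset.mul_sum, sub_eq_zero]
    refine Finset.sum_congr rfl fun i _ => ?_
    rw [add_comm (i : ℕ)]
    ring
end MomentFunctional

section AdjoinRoot

variable {R M : Type*} [CommRing R] [AddCommGroup M] [Module R M]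

theorem AdjoinRoot.isUnit_root_of_isUnit_coeff_zero {q : R[X]} (hq : IsUnit (q.coeff 0)) :
    IsUnit (AdjoinRoot.root q) := by
  obtain ⟨e, he⟩ := X_dvd_sub_C (p := q)
  have hmul : AdjoinRoot.root q * AdjoinRoot.mk q e = -AdjoinRoot.of q (q.coeff 0) := by
    rw [← AdjoinRoot.mk_X, ← map_mul, ← he, map_sub, AdjoinRoot.mk_self, AdjoinRoot.mk_C,
      zero_sub]
  exact isUnit_of_mul_isUnit_left (hmul ▸ (hq.map _).neg)

theorem LinearMap.map_eq_of_adjoinRoot_mk_eq {L : R[X] →ₗ[R] M} {q : R[X]}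
    (hL : ∀ g, L (q * g) = 0) {f g : R[X]} (h : AdjoinRoot.mk q f = AdjoinRoot.mk q g) :
    L f = L g := by
  obtain ⟨c, hc⟩ := AdjoinRoot.mk_eq_mk.1 h
  rw [← sub_eq_zero, ← map_sub, hc, hL]

theorem LinearMap.exists_degree_lt_map_X_pow_mul_sq_eq [Nontrivial R] {L : R[X] →ₗ[R] M}
    {q : R[X]} (hq : q.Monic) (hX : IsUnit (AdjoinRoot.root q)) (hL : ∀ g, L (q * g) = 0)
    (e : ℕ) (p : R[X]) :
    ∃ ρ : R[X], ρ.degree < q.degree ∧ L (X ^ e * p ^ 2) = L (X ^ (e + 2) * ρ ^ 2) := by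
  obtain ⟨v, hv⟩ := hX.exists_right_inv
  obtain ⟨d, rfl⟩ := AdjoinRoot.mk_surjective v
  refine ⟨(p * d) %ₘ q, ?_, L.map_eq_of_adjoinRoot_mk_eq hL ?_⟩
  · exact degree_modByMonic_lt _ hq
  · have hρ : AdjoinRoot.mk q ((p * d) %ₘ q) = AdjoinRoot.mk q (p * d) := by
      rw [← AdjoinRoot.modByMonicHom_mk hq, AdjoinRoot.mk_leftInverse hq]
    simp only [map_mul, map_pow, hρ, AdjoinRoot.mk_X]
    linear_combination (-(AdjoinRoot.root q ^ e * AdjoinRoot.mk q p ^ 2 *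
      (AdjoinRoot.root q * AdjoinRoot.mk q d + 1))) * hv

end AdjoinRoot

section Hankel

variable {R : Type*} [CommRing R]

def hankel (u : ℕ → R) (e N : ℕ) : Matrix (Fin N) (Fin N) R :=
  Matrix.of fun i j => u (e + i + j)

theorem isHermitian_hankel [StarRing R] [TrivialStar R] (u : ℕ → R) (e N : ℕ) :
    (hankel u e N).IsHermitian := by
  ext i j
  simp only [hankel, Matrix.conjTranspose_apply, Matrix.of_apply, star_trivial, add_right_comm]

theorem momentFunctional_X_pow_mul_sq (u : ℕ → R) (e N : ℕ) (w : Fin N → R) :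
    momentFunctional u (X ^ e * (∑ i : Fin N, C (w i) * X ^ (i : ℕ)) ^ 2)
      = w ⬝ᵥ hankel u e N *ᵥ w := by
  rw [sq, Finset.sum_mul_sum]
  simp only [Finset.mul_sum, map_sum, dotProduct, Matrix.mulVec, hankel, Matrix.of_apply]
  refine Finset.sum_congr rfl fun i _ => Finset.sum_congr rfl fun j _ => ?_
  rw [show X ^ e * (C (w i) * X ^ (i : ℕ) * (C (w j) * X ^ (j : ℕ)))
      = C (w i * w j) * X ^ (e + i + j) by rw [C_mul, pow_add, pow_add]; ring,
    momentFunctional_C_mul_X_pow]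
  ring

theorem posSemidef_hankel_iff [PartialOrder R] [StarRing R] [TrivialStar R] (u : ℕ → R)
    (e N : ℕ) :
    (hankel u e N).PosSemidef ↔
      ∀ p : R[X], p.degree < N → 0 ≤ momentFunctional u (X ^ e * p ^ 2) := by
  rw [Matrix.posSemidef_iff_dotProduct_mulVec]
  simp only [isHermitian_hankel, true_and, star_trivial, ← momentFunctional_X_pow_mul_sq]
  refine ⟨fun h p hp => ?_, fun h w => h _ (degree_sum_fin_lt w)⟩
  have hsum : ∑ i : Fin N, C (p.coeff i) * X ^ (i : ℕ) = p :=
    (sum_fin (fun i c => C c * X ^ i) (by simp) hp).trans p.sum_C_mul_X_pow_eq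
  simpa only [hsum] using h fun i => p.coeff i

end Hankel

/-- Let `γ` be a real sequence with `γ_{n+1} = Σ_{j=0}^{r-1} a_j γ_{n-j}`
for all `n ≥ r-1` and `a_{r-1} ≠ 0`.  Let `M_n(k)` be the `(n+1)×(n+1)` Hankel matrix with
entries `γ_{k+i+j}`.  If `M_{r-1}(2n_0)` is positive semidefinite for some `n_0 ≥ 1`,
then `M_r(2n_0 − 2)` is positive semidefinite. -/
theorem stmt_10 (r : ℕ) (hr : 0 < r) (γ : ℕ → ℝ) (a : Fin r → ℝ)
    (ha : a ⟨r - 1, by omega⟩ ≠ 0)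
    (hrec : ∀ n : ℕ, r - 1 ≤ n → γ (n + 1) = ∑ j : Fin r, a j * γ (n - (j : ℕ)))
    (n0 : ℕ) (hn0 : 1 ≤ n0)
    (hpsd : (Matrix.of fun i j : Fin (r - 1 + 1) =>
        γ (2 * n0 + (i : ℕ) + (j : ℕ))).PosSemidef) :
    (Matrix.of fun i j : Fin (r + 1) => γ (2 * n0 - 2 + (i : ℕ) + (j : ℕ))).PosSemidef := by
  set E : LinearRecurrence ℝ := ⟨r, fun i => a i.rev⟩
  have hsol : E.IsSolution γ := LinearRecurrence.isSolution_rev_of_succ_eq hr a γ hrec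
  have hroot : IsUnit (AdjoinRoot.root E.charPoly) :=
    AdjoinRoot.isUnit_root_of_isUnit_coeff_zero <| by
      rw [E.charPoly_coeff_zero hr]
      exact (neg_ne_zero.2 ha).isUnit
  change (hankel γ _ _).PosSemidef at hpsd
  change (hankel γ _ _).PosSemidef
  rw [posSemidef_hankel_iff] at hpsd ⊢
  intro p _
  obtain ⟨ρ, hρ, hp⟩ := (momentFunctional γ).exists_degree_lt_map_X_pow_mul_sq_eq
    E.charPoly_monic hroot hsol.momentFunctional_charPoly_mul (2 * n0 - 2) p
  rw [hp, show 2 * n0 - 2 + 2 = 2 * n0 by omega]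
  refine hpsd ρ (hρ.trans_eq ?_)
  rw [E.charPoly_degree_eq_order, Nat.sub_add_cancel hr]
end

section
/- Let a_1, a_2, a_3, a_4 > 0 and 0 < λ_3 < λ_4, and suppose real numbers b_1, b_2, b_3, b_4 ≥ 0 satisfy: b_1 b_4 = 0, b_2 b_3 = 0, b_1 = b_2 = 0, together with b_3² = λ_4(a_4² − a_1²), b_4² = λ_3(a_3² − a_2²), 2 b_3 b_4 = (λ_3 + λ_4)(a_3 a_4 − a_1 a_2), and a_2 a_4 = a_1 a_3. Then b_3 b_4 = 0 and hence (λ_3 + λ_4)(a_3 a_4 − a_1 a_2) = 0, i.e., a_3 a_4 = a_1 a_2. -/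
/-- Let `a_1, a_2, a_3, a_4 > 0`, `0 < λ_3 < λ_4`, and suppose
`b_1, b_2, b_3, b_4 ≥ 0` satisfy `b_1 b_4 = 0`, `b_2 b_3 = 0`, `b_1 = b_2 = 0`, together
with `b_3² = λ_4(a_4² − a_1²)`, `b_4² = λ_3(a_3² − a_2²)`,
`2 b_3 b_4 = (λ_3 + λ_4)(a_3 a_4 − a_1 a_2)`, and `a_2 a_4 = a_1 a_3`.  Then `b_3 b_4 = 0`
and hence `(λ_3 + λ_4)(a_3 a_4 − a_1 a_2) = 0`, i.e. `a_3 a_4 = a_1 a_2`. -/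
theorem stmt_16 (a1 a2 a3 a4 l3 l4 b1 b2 b3 b4 : ℝ)
    (ha1 : 0 < a1) (ha2 : 0 < a2) (ha3 : 0 < a3) (ha4 : 0 < a4)
    (hl3 : 0 < l3) (hl34 : l3 < l4)
    (hb1 : 0 ≤ b1) (hb2 : 0 ≤ b2) (hb3 : 0 ≤ b3) (hb4 : 0 ≤ b4)
    (h14 : b1 * b4 = 0) (h23 : b2 * b3 = 0) (hb10 : b1 = 0) (hb20 : b2 = 0)
    (e3 : b3 ^ 2 = l4 * (a4 ^ 2 - a1 ^ 2)) (e4 : b4 ^ 2 = l3 * (a3 ^ 2 - a2 ^ 2))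
    (e34 : 2 * b3 * b4 = (l3 + l4) * (a3 * a4 - a1 * a2))
    (hdet : a2 * a4 = a1 * a3) :
    b3 * b4 = 0 ∧ (l3 + l4) * (a3 * a4 - a1 * a2) = 0 ∧ a3 * a4 = a1 * a2 := by
  have key : (l4 - l3)^2 * (a3*a4 - a1*a2)^2 = 0 := by
    linear_combination (-(2*b3*b4) - (l3 + l4) * (a3 * a4 - a1 * a2)) * e34 +
      4*b4^2*e3 + 4*l4*(a4^2-a1^2)*e4 + 4*l3*l4*(a1*a3 - a2*a4)*hdet
  have hne : (l4 - l3)^2 ≠ 0 := pow_ne_zero _ (sub_ne_zero.mpr (ne_of_gt hl34))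
  have hD : a3*a4 - a1*a2 = 0 := by
    rcases mul_eq_zero.mp key with h | h
    · exact absurd h hne
    · exact pow_eq_zero_iff (n := 2) (by norm_num) |>.mp h
  refine ⟨by linear_combination e34/2 + ((l3+l4)/2)*hD, by rw [hD]; ring, by linarith⟩
end
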